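/- Let 1 < M ≤ d+1 and τ > 0. Define the mini-batch InfoNCE loss L(U,V) = (1/M) Σ_{i=1}^M −log( exp(u_i·v_i/τ) / Σ_{j=1}^M exp(u_i·v_j/τ) ) for M-tuples U, V of unit vectors in ℝ^d, and its symmetric version L_sym(U,V) = ½(L(U,V) + L(V,U)). Then L_sym is minimized over all such (U,V) exactly at the configurations with u_i = v_i for all i and ⟨u_i, u_j⟩ = −1/(M−1) for all i ≠ j; these are the unique minimizers. -/

import Mathlib

open scoped BigOperators RealInnerProductSpace

noncomputable section

/-- Mini-batch InfoNCE loss with temperature `τ`. -/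
def Lnce (d M : ℕ) (τ : ℝ)
    (U V : Fin M → EuclideanSpace ℝ (Fin d)) : ℝ :=
  (1 / (M : ℝ)) * ∑ i, -Real.log
    (Real.exp (⟪U i, V i⟫ / τ) / ∑ j, Real.exp (⟪U i, V j⟫ / τ))

/-- Symmetrised InfoNCE loss. -/
def LnceSym (d M : ℕ) (τ : ℝ)
    (U V : Fin M → EuclideanSpace ℝ (Fin d)) : ℝ :=
  (Lnce d M τ U V + Lnce d M τ V U) / 2

/-!
Row `i` of `Lnce U V` is `log (1 + ∑_{j ≠ i} exp gᵢⱼ)` in the logit gaps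
`gᵢⱼ = (⟪uᵢ, vⱼ⟫ - ⟪uᵢ, vᵢ⟫) / τ`. By Jensen's inequality for `exp` this lies above its tangent
plane at the point where every gap takes the simplex value `(-1/(M-1) - 1) / τ`, strictly unless
all gaps take it. Summed over the rows, the linear parts add up to
`(⟪∑ uᵢ, ∑ vᵢ⟫ - M ∑ ⟪uᵢ, vᵢ⟫ + M²) / τ`, which for unit vectors is
`(⟪∑ uᵢ, ∑ vᵢ⟫ + (M/2) ∑ ‖uᵢ - vᵢ‖²) / τ`, and by polarization and Cauchy–Schwarz this is at least
`(M/4) ∑ ‖uᵢ - vᵢ‖² / τ ≥ 0`. So the symmetric loss is at least its value at a regular simplex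
(which exists since `M - 1 ≤ d`), and equality forces first `U = V` and then every gap to take
the simplex value, i.e. `⟪uᵢ, uⱼ⟫ = -1/(M-1)`.
-/
open Finset Module Real

lemma exists_linearIsometry_of_finrank_le {E F : Type*}
    [NormedAddCommGroup E] [InnerProductSpace ℝ E] [FiniteDimensional ℝ E]
    [NormedAddCommGroup F] [InnerProductSpace ℝ F] [FiniteDimensional ℝ F]
    (h : finrank ℝ E ≤ finrank ℝ F) : Nonempty (E →ₗᵢ[ℝ] F) := by
  let b := stdOrthonormalBasis ℝ E
  let v : Fin (finrank ℝ E) → F := stdOrthonormalBasis ℝ F ∘ Fin.castLE h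
  have hv : Orthonormal ℝ v :=
    (stdOrthonormalBasis ℝ F).orthonormal.comp _ (Fin.castLE_injective h)
  let f := b.toBasis.constr ℝ v
  have hf : Orthonormal ℝ (f ∘ b.toBasis) := by
    convert hv
    ext1 k
    exact b.toBasis.constr_basis ℝ v k
  exact ⟨f.isometryOfOrthonormal b.orthonormal hf⟩

lemma exists_regular_simplex {E : Type*} [NormedAddCommGroup E] [InnerProductSpace ℝ E]
    [FiniteDimensional ℝ E] {M : ℕ} (hM : 1 < M) (hME : M ≤ finrank ℝ E + 1) :
    ∃ W : Fin M → E, (∀ i, ‖W i‖ = 1) ∧ ∀ i j, i ≠ j → ⟪W i, W j⟫ = -1 / ((M : ℝ) - 1) := by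
  have hM1 : (0 : ℝ) < M - 1 := by
    rw [sub_pos]; exact_mod_cast hM
  -- the centred vertices `eᵢ - 𝟙 / M` of the standard simplex lie in `𝟙ᗮ ≅ ℝ^(M-1)`
  set one : EuclideanSpace ℝ (Fin M) := WithLp.toLp 2 fun _ => 1
  set x : Fin M → EuclideanSpace ℝ (Fin M) :=
    fun i => EuclideanSpace.single i 1 - (M : ℝ)⁻¹ • one
  have hone : ‖one‖ ^ 2 = M := by simp [one, EuclideanSpace.norm_sq_eq]
  have hx_mem : ∀ i, x i ∈ (ℝ ∙ one)ᗮ := fun i => by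
    rw [Submodule.mem_orthogonal_singleton_iff_inner_right]
    have : (M : ℝ) ≠ 0 := by positivity
    simp [x, one, inner_sub_right, inner_smul_right, EuclideanSpace.inner_single_right,
      EuclideanSpace.norm_sq_eq, this]
  have hx_inner : ∀ i j, ⟪x i, x j⟫ = (if i = j then 1 else 0) - (M : ℝ)⁻¹ := fun i j => by
    have : (M : ℝ) ≠ 0 := by positivity
    simp [x, inner_sub_left, inner_sub_right, inner_smul_left, inner_smul_right,
      EuclideanSpace.inner_single_left, EuclideanSpace.inner_single_right, eq_comm, hone]
    field_simp
    ring
  have hone_ne : one ≠ 0 := by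
    intro h
    rw [h, norm_zero] at hone
    norm_num at hone
    linarith
  have : Fact (finrank ℝ (EuclideanSpace ℝ (Fin M)) = (M - 1) + 1) :=
    ⟨by rw [finrank_euclideanSpace_fin]; omega⟩
  obtain ⟨T⟩ := exists_linearIsometry_of_finrank_le (E := (ℝ ∙ one)ᗮ) (F := E)
    (by rw [Submodule.finrank_orthogonal_span_singleton (n := M - 1) hone_ne]; omega)
  set r := √((M : ℝ) / (M - 1))
  set W : Fin M → E := fun i => T ⟨r • x i, Submodule.smul_mem _ _ (hx_mem i)⟩
  have hW : ∀ i j, ⟪W i, W j⟫ = (M : ℝ) / (M - 1) * ((if i = j then 1 else 0) - (M : ℝ)⁻¹) :=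
    fun i j => by
      rw [LinearIsometry.inner_map_map, Submodule.coe_inner, real_inner_smul_left,
        real_inner_smul_right, ← mul_assoc, Real.mul_self_sqrt (by positivity), hx_inner]
  refine ⟨W, fun i => ?_, fun i j hij => ?_⟩
  · have := hW i i
    rw [if_pos rfl, real_inner_self_eq_norm_sq, show (M : ℝ) / (M - 1) * (1 - (M : ℝ)⁻¹) = 1 by
      field_simp] at this
    exact (pow_eq_one_iff_of_nonneg (norm_nonneg _) two_ne_zero).mp this
  · rw [hW, if_neg hij]
    field_simp
    ring

lemma exp_mul_sum_lt {ι : Type*} (s : Finset ι) {t : ℝ} (ht : 0 < t) (hts : t * #s < 1)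
    (δ : ι → ℝ) (hδ : ∃ j ∈ s, δ j ≠ 0) :
    exp (t * ∑ j ∈ s, δ j) < 1 - t * #s + t * ∑ j ∈ s, exp (δ j) := by
  classical
  -- strict Jensen for `exp` at the points `0` (weight `1 - t #s`) and `δ j` (weight `t` each)
  let w : Option ι → ℝ := fun o => o.elim (1 - t * #s) fun _ => t
  let p : Option ι → ℝ := fun o => o.elim 0 δ
  have hw : ∀ o ∈ insertNone s, 0 < w o := by
    rintro (_ | j) _ <;> simp [w] <;> linarith
  have hw₁ : ∑ o ∈ insertNone s, w o = 1 := by simp [w, sum_insertNone, mul_comm]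
  have hp : ∃ a ∈ insertNone s, ∃ b ∈ insertNone s, p a ≠ p b := by
    obtain ⟨j, hj, hδj⟩ := hδ
    exact ⟨some j, by simpa using hj, none, by simp, hδj⟩
  have := strictConvexOn_exp.map_sum_lt hw hw₁ (fun _ _ => Set.mem_univ _) hp
  simpa [w, p, sum_insertNone, mul_sum] using this

lemma tangent_lt_log_one_add_sum_exp {ι : Type*} (s : Finset ι) (y₀ : ℝ) (y : ι → ℝ)
    (hy : ∃ j ∈ s, y j ≠ y₀) :
    log (1 + #s * exp y₀) + exp y₀ / (1 + #s * exp y₀) * ∑ j ∈ s, (y j - y₀) <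
      log (1 + ∑ j ∈ s, exp (y j)) := by
  set c := 1 + #s * exp y₀
  set t := exp y₀ / c
  have hc : 0 < c := by positivity
  have ht : 0 < t := by positivity
  have hts : t * #s < 1 := by
    rw [div_mul_eq_mul_div, div_lt_one hc]
    linarith
  have hfactor : 1 + ∑ j ∈ s, exp (y j) = c * (1 - t * #s + t * ∑ j ∈ s, exp (y j - y₀)) := by
    simp only [exp_sub, ← sum_div, t]
    field_simp
    ring
  have hjensen := exp_mul_sum_lt s ht hts (fun j => y j - y₀)
    (by simpa only [sub_ne_zero] using hy)
  rw [hfactor, log_mul hc.ne' (by positivity), add_lt_add_iff_left,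
    lt_log_iff_exp_lt (by positivity)]
  exact hjensen

lemma tangent_le_log_one_add_sum_exp {ι : Type*} (s : Finset ι) (y₀ : ℝ) (y : ι → ℝ) :
    log (1 + #s * exp y₀) + exp y₀ / (1 + #s * exp y₀) * ∑ j ∈ s, (y j - y₀) ≤
      log (1 + ∑ j ∈ s, exp (y j)) := by
  by_cases hy : ∃ j ∈ s, y j ≠ y₀
  · exact (tangent_lt_log_one_add_sum_exp s y₀ y hy).le
  · push Not at hy
    have hexp : ∀ j ∈ s, exp (y j) = exp y₀ := fun j hj => by rw [hy j hj]
    simp [sum_congr rfl hy, sum_congr rfl hexp]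

section InnerSums

variable {ι E : Type*} [Fintype ι] [NormedAddCommGroup E] [InnerProductSpace ℝ E]

lemma sum_sum_erase_inner_sub_inner [DecidableEq ι] (u v : ι → E) :
    ∑ i, ∑ j ∈ univ.erase i, (⟪u i, v j⟫ - ⟪u i, v i⟫) =
      ⟪∑ i, u i, ∑ i, v i⟫ - Fintype.card ι * ∑ i, ⟪u i, v i⟫ := by
  have hdiag : ∀ i, ∑ j ∈ univ.erase i, (⟪u i, v j⟫ - ⟪u i, v i⟫) =
      ∑ j, (⟪u i, v j⟫ - ⟪u i, v i⟫) := fun i => sum_erase _ (sub_self _)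
  simp only [hdiag, sum_sub_distrib, sum_const, card_univ, nsmul_eq_mul, mul_sum, sum_inner,
    inner_sum]
  rw [sum_comm]

lemma neg_card_mul_sum_norm_sub_sq_le_four_mul_inner_sum (u v : ι → E) :
    -(Fintype.card ι * ∑ i, ‖u i - v i‖ ^ 2) ≤ 4 * ⟪∑ i, u i, ∑ i, v i⟫ := by
  set a := ∑ i, u i
  set b := ∑ i, v i
  have hab : ‖a - b‖ ^ 2 ≤ Fintype.card ι * ∑ i, ‖u i - v i‖ ^ 2 :=
    calc ‖a - b‖ ^ 2 ≤ (∑ i, ‖u i - v i‖) ^ 2 := by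
          gcongr
          rw [← sum_sub_distrib]
          exact norm_sum_le _ _
      _ ≤ Fintype.card ι * ∑ i, ‖u i - v i‖ ^ 2 := sq_sum_le_card_mul_sum_sq
  -- polarization: `4 ⟪a, b⟫ = ‖a + b‖² - ‖a - b‖²`
  nlinarith [norm_add_sq_real a b, norm_sub_sq_real a b, sq_nonneg ‖a + b‖]

end InnerSums

section InfoNCE

/- At a regular simplex every logit gap equals `simplexGap M τ`, every row of the loss equals
`simplexLoss M τ`, and `simplexWeight M τ`, the softmax weight of one negative, is the slope of
the tangent bound. -/
def simplexGap (M : ℕ) (τ : ℝ) : ℝ := (-1 / ((M : ℝ) - 1) - 1) / τ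

def simplexWeight (M : ℕ) (τ : ℝ) : ℝ :=
  exp (simplexGap M τ) / (1 + ((M : ℝ) - 1) * exp (simplexGap M τ))

def simplexLoss (M : ℕ) (τ : ℝ) : ℝ := log (1 + ((M : ℝ) - 1) * exp (simplexGap M τ))

variable {d M : ℕ} {τ : ℝ}

lemma simplexWeight_pos (hM : 1 ≤ M) : 0 < simplexWeight M τ := by
  have : (0 : ℝ) ≤ M - 1 := by rw [sub_nonneg]; exact_mod_cast hM
  unfold simplexWeight
  positivity

lemma cast_card_univ_erase (hM : 1 ≤ M) (i : Fin M) : (#(univ.erase i) : ℝ) = M - 1 := by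
  rw [card_erase_of_mem (mem_univ i), card_univ, Fintype.card_fin, Nat.cast_sub hM, Nat.cast_one]

lemma simplexLoss_add_le_log (hM : 1 ≤ M) (i : Fin M) (y : Fin M → ℝ) :
    simplexLoss M τ + simplexWeight M τ * ∑ j ∈ univ.erase i, (y j - simplexGap M τ) ≤
      log (1 + ∑ j ∈ univ.erase i, exp (y j)) := by
  have := tangent_le_log_one_add_sum_exp (univ.erase i) (simplexGap M τ) y
  rwa [cast_card_univ_erase hM] at this

lemma simplexLoss_add_lt_log (hM : 1 ≤ M) (i : Fin M) (y : Fin M → ℝ)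
    (hy : ∃ j ∈ univ.erase i, y j ≠ simplexGap M τ) :
    simplexLoss M τ + simplexWeight M τ * ∑ j ∈ univ.erase i, (y j - simplexGap M τ) <
      log (1 + ∑ j ∈ univ.erase i, exp (y j)) := by
  have := tangent_lt_log_one_add_sum_exp (univ.erase i) (simplexGap M τ) y hy
  rwa [cast_card_univ_erase hM] at this

lemma lnce_eq_sum_log (U V : Fin M → EuclideanSpace ℝ (Fin d)) :
    Lnce d M τ U V =
      1 / M * ∑ i, log (1 + ∑ j ∈ univ.erase i, exp ((⟪U i, V j⟫ - ⟪U i, V i⟫) / τ)) := by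
  unfold Lnce
  congr 1
  refine sum_congr rfl fun i _ => ?_
  rw [← log_inv, inv_div, sum_div, ← add_sum_erase _ _ (mem_univ i), div_self (exp_pos _).ne']
  simp only [← exp_sub, sub_div]

lemma mean_row_tangent_eq (hM : 1 < M) (U V : Fin M → EuclideanSpace ℝ (Fin d)) :
    1 / M * ∑ i, (simplexLoss M τ + simplexWeight M τ *
        ∑ j ∈ univ.erase i, ((⟪U i, V j⟫ - ⟪U i, V i⟫) / τ - simplexGap M τ)) =
      simplexLoss M τ + simplexWeight M τ *
        ((⟪∑ i, U i, ∑ i, V i⟫ - M * ∑ i, ⟪U i, V i⟫ + M ^ 2) / (M * τ)) := by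
  have hM1 : (M : ℝ) - 1 ≠ 0 := by
    rw [sub_ne_zero]; exact_mod_cast hM.ne'
  have hM0 : (M : ℝ) ≠ 0 := by positivity
  have hrow : ∀ i, ∑ j ∈ univ.erase i, ((⟪U i, V j⟫ - ⟪U i, V i⟫) / τ - simplexGap M τ) =
      (∑ j ∈ univ.erase i, (⟪U i, V j⟫ - ⟪U i, V i⟫)) / τ - (M - 1) * simplexGap M τ := fun i => by
    rw [sum_sub_distrib, sum_div, sum_const, nsmul_eq_mul, cast_card_univ_erase hM.le]
  have hsum := sum_sum_erase_inner_sub_inner U V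
  rw [Fintype.card_fin] at hsum
  simp only [hrow]
  rw [sum_add_distrib, ← mul_sum, sum_sub_distrib, ← sum_div, hsum]
  simp only [sum_const, card_univ, Fintype.card_fin, nsmul_eq_mul, simplexGap]
  field_simp
  ring

lemma simplexLoss_add_le_lnce (hM : 1 < M) (U V : Fin M → EuclideanSpace ℝ (Fin d)) :
    simplexLoss M τ + simplexWeight M τ *
        ((⟪∑ i, U i, ∑ i, V i⟫ - M * ∑ i, ⟪U i, V i⟫ + M ^ 2) / (M * τ)) ≤ Lnce d M τ U V := by
  rw [lnce_eq_sum_log, ← mean_row_tangent_eq hM]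
  gcongr with i
  exact simplexLoss_add_le_log hM.le i _

lemma simplexLoss_add_lt_lnce (hM : 1 < M) (U V : Fin M → EuclideanSpace ℝ (Fin d))
    (h : ∃ i, ∃ j ≠ i, (⟪U i, V j⟫ - ⟪U i, V i⟫) / τ ≠ simplexGap M τ) :
    simplexLoss M τ + simplexWeight M τ *
        ((⟪∑ i, U i, ∑ i, V i⟫ - M * ∑ i, ⟪U i, V i⟫ + M ^ 2) / (M * τ)) < Lnce d M τ U V := by
  obtain ⟨i, j, hji, hgap⟩ := h
  rw [lnce_eq_sum_log, ← mean_row_tangent_eq hM]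
  refine mul_lt_mul_of_pos_left (sum_lt_sum (fun k _ => simplexLoss_add_le_log hM.le k _)
    ⟨i, mem_univ i, simplexLoss_add_lt_log hM.le i _ ⟨j, mem_erase.mpr ⟨hji, mem_univ j⟩, hgap⟩⟩) ?_
  have : (0 : ℝ) < M := by positivity
  positivity

lemma lnceSym_self (U : Fin M → EuclideanSpace ℝ (Fin d)) :
    LnceSym d M τ U U = Lnce d M τ U U :=
  add_self_div_two _

lemma lnce_self_eq_simplexLoss (hM : 1 < M) (U : Fin M → EuclideanSpace ℝ (Fin d))
    (hU : ∀ i, ‖U i‖ = 1) (hreg : ∀ i j, i ≠ j → ⟪U i, U j⟫ = -1 / ((M : ℝ) - 1)) :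
    Lnce d M τ U U = simplexLoss M τ := by
  have hrow : ∀ i, log (1 + ∑ j ∈ univ.erase i, exp ((⟪U i, U j⟫ - ⟪U i, U i⟫) / τ)) =
      simplexLoss M τ := fun i => by
    have hgap : ∀ j ∈ univ.erase i, exp ((⟪U i, U j⟫ - ⟪U i, U i⟫) / τ) = exp (simplexGap M τ) :=
      fun j hj => by
        rw [hreg i j (mem_erase.mp hj).1.symm, real_inner_self_eq_norm_sq, hU, one_pow,
          simplexGap]
    rw [sum_congr rfl hgap, sum_const, nsmul_eq_mul, cast_card_univ_erase hM.le, simplexLoss]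
  have : (M : ℝ) ≠ 0 := by positivity
  rw [lnce_eq_sum_log, sum_congr rfl fun i _ => hrow i, sum_const, card_univ, Fintype.card_fin,
    nsmul_eq_mul]
  field_simp

lemma simplexLoss_add_le_lnceSym (hM : 1 < M) (hτ : 0 < τ) (U V : Fin M → EuclideanSpace ℝ (Fin d))
    (hU : ∀ i, ‖U i‖ = 1) (hV : ∀ i, ‖V i‖ = 1) :
    simplexLoss M τ + simplexWeight M τ * ((∑ i, ‖U i - V i‖ ^ 2) / (4 * τ)) ≤
      LnceSym d M τ U V := by
  set D := ∑ i, ‖U i - V i‖ ^ 2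
  set σ := ∑ i, ⟪U i, V i⟫
  set X := ⟪∑ i, U i, ∑ i, V i⟫ - M * σ + M ^ 2
  have hM0 : (0 : ℝ) < M := by positivity
  have hUV := simplexLoss_add_le_lnce (τ := τ) hM U V
  have hVU := simplexLoss_add_le_lnce (τ := τ) hM V U
  rw [real_inner_comm, sum_congr rfl fun i _ => real_inner_comm (U i) (V i)] at hVU
  have hD : D = 2 * M - 2 * σ := by
    simp only [D, σ, norm_sub_sq_real, hU, hV, sum_sub_distrib, sum_add_distrib, ← mul_sum]
    simp
    ring
  have hgeo := neg_card_mul_sum_norm_sub_sq_le_four_mul_inner_sum U V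
  rw [Fintype.card_fin] at hgeo
  have hX : M * D / 4 ≤ X := by
    have : M * D = 2 * M ^ 2 - 2 * M * σ := by rw [hD]; ring
    linarith
  have := simplexWeight_pos (τ := τ) hM.le
  calc simplexLoss M τ + simplexWeight M τ * (D / (4 * τ))
      = simplexLoss M τ + simplexWeight M τ * ((M * D / 4) / (M * τ)) := by
        field_simp
    _ ≤ simplexLoss M τ + simplexWeight M τ * (X / (M * τ)) := by gcongr
    _ ≤ LnceSym d M τ U V := by unfold LnceSym; linarith

lemma simplexLoss_le_lnceSym (hM : 1 < M) (hτ : 0 < τ) (U V : Fin M → EuclideanSpace ℝ (Fin d))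
    (hU : ∀ i, ‖U i‖ = 1) (hV : ∀ i, ‖V i‖ = 1) :
    simplexLoss M τ ≤ LnceSym d M τ U V := by
  refine le_trans (le_add_of_nonneg_right ?_) (simplexLoss_add_le_lnceSym hM hτ U V hU hV)
  have := simplexWeight_pos (τ := τ) hM.le
  positivity

lemma eq_of_lnceSym_le_simplexLoss (hM : 1 < M) (hτ : 0 < τ)
    (U V : Fin M → EuclideanSpace ℝ (Fin d)) (hU : ∀ i, ‖U i‖ = 1) (hV : ∀ i, ‖V i‖ = 1)
    (h : LnceSym d M τ U V ≤ simplexLoss M τ) : U = V := by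
  have hbound := simplexLoss_add_le_lnceSym hM hτ U V hU hV
  have hweight := simplexWeight_pos (τ := τ) hM.le
  have hD : ∑ i, ‖U i - V i‖ ^ 2 = 0 := by
    refine le_antisymm ?_ (by positivity)
    by_contra! hpos
    have : 0 < simplexWeight M τ * ((∑ i, ‖U i - V i‖ ^ 2) / (4 * τ)) := by positivity
    linarith
  funext i
  rw [sum_eq_zero_iff_of_nonneg fun i _ => by positivity] at hD
  simpa [sub_eq_zero] using hD i (mem_univ i)

lemma inner_eq_of_lnce_self_le (hM : 1 < M) (hτ : 0 < τ) (U : Fin M → EuclideanSpace ℝ (Fin d))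
    (hU : ∀ i, ‖U i‖ = 1) (h : Lnce d M τ U U ≤ simplexLoss M τ) :
    ∀ i j, i ≠ j → ⟪U i, U j⟫ = -1 / ((M : ℝ) - 1) := by
  by_contra! hreg
  obtain ⟨i, j, hij, hne⟩ := hreg
  have hii : ∀ i, ⟪U i, U i⟫ = 1 := fun i => by rw [real_inner_self_eq_norm_sq, hU, one_pow]
  have hgap : (⟪U i, U j⟫ - ⟪U i, U i⟫) / τ ≠ simplexGap M τ := by
    rw [hii, simplexGap, Ne, div_left_inj' hτ.ne', sub_left_inj]
    exact hne
  have hlt := simplexLoss_add_lt_lnce hM U U ⟨i, j, hij.symm, hgap⟩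
  simp only [hii, sum_const, card_univ, Fintype.card_fin, nsmul_eq_mul, mul_one,
    real_inner_self_eq_norm_sq] at hlt
  have := simplexWeight_pos (τ := τ) hM.le
  have : (0 : ℝ) < M := by positivity
  have : 0 ≤ simplexWeight M τ * ((‖∑ i, U i‖ ^ 2 - M * M + M ^ 2) / (M * τ)) := by
    rw [show (M : ℝ) * M = M ^ 2 by ring, sub_add_cancel]
    positivity
  linarith

end InfoNCE

theorem stmt_3 (d M : ℕ) (hM : 1 < M) (hMd : M ≤ d + 1) (τ : ℝ) (hτ : 0 < τ) :
    ∀ U V : Fin M → EuclideanSpace ℝ (Fin d),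
      (∀ i, ‖U i‖ = 1) → (∀ i, ‖V i‖ = 1) →
      ((∀ U' V' : Fin M → EuclideanSpace ℝ (Fin d),
          (∀ i, ‖U' i‖ = 1) → (∀ i, ‖V' i‖ = 1) →
          LnceSym d M τ U V ≤ LnceSym d M τ U' V') ↔
        ((∀ i, U i = V i) ∧
          ∀ i j, i ≠ j → ⟪U i, U j⟫ = -1 / ((M : ℝ) - 1))) := by
  intro U V hU hV
  obtain ⟨W, hW, hWreg⟩ := exists_regular_simplex (E := EuclideanSpace ℝ (Fin d)) hM
    (by rwa [finrank_euclideanSpace_fin])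
  have hLW : LnceSym d M τ W W = simplexLoss M τ := by
    rw [lnceSym_self, lnce_self_eq_simplexLoss hM W hW hWreg]
  constructor
  · intro hmin
    have hle : LnceSym d M τ U V ≤ simplexLoss M τ := hLW ▸ hmin W W hW hW
    obtain rfl := eq_of_lnceSym_le_simplexLoss hM hτ U V hU hV hle
    rw [lnceSym_self] at hle
    exact ⟨fun _ => rfl, inner_eq_of_lnce_self_le hM hτ U hU hle⟩
  · rintro ⟨hUV, hreg⟩ U' V' hU' hV'
    obtain rfl : U = V := funext hUV
    rw [lnceSym_self, lnce_self_eq_simplexLoss hM U hU hreg]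
    exact simplexLoss_le_lnceSym hM hτ U' V' hU' hV'
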